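/- arXiv:2209.10092 — 5 statements merged into one kernel-verified Lean document; each statement's English description precedes it below -/
import Mathlib

section
/- For all real numbers a and b, the Lebesgue integral over the real line of the product (𝟙{a ≤ x} − 𝟙{−a < x})·(𝟙{b ≤ x} − 𝟙{−b < x}) with respect to x equals |a + b| − |a − b|. -/
/-!
Off the null set `{a}`, the factor `𝟙{a ≤ x} − 𝟙{−a < x}` equals `−sign a` times the indicator
of `(−|a|, |a|]`. A product of two such factors is therefore `sign a · sign b` times the indicator
of the interval of half-width `min |a| |b|`, whose integral `2 · sign a · sign b · min |a| |b|`
is `|a + b| − |a − b|`.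
-/

open MeasureTheory Set

theorem step_sub_step_ae_eq (a : ℝ) :
    (fun x : ℝ => (if a ≤ x then (1 : ℝ) else 0) - (if -a < x then (1 : ℝ) else 0))
      =ᵐ[volume] fun x => -Real.sign a * (Ioc (-|a|) |a|).indicator 1 x := by
  filter_upwards [volume.ae_ne a] with x hx
  rcases lt_trichotomy a 0 with ha | rfl | ha <;>
    simp only [Real.sign_of_neg, Real.sign_of_pos, Real.sign_zero, abs_of_neg, abs_of_pos,
      abs_zero, indicator, mem_Ioc, Pi.one_apply, *] <;>
    grind

theorem integral_indicator_Ioc_mul_indicator_Ioc {r s : ℝ} (hr : 0 ≤ r) (hs : 0 ≤ s) :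
    ∫ x, (Ioc (-r) r).indicator (1 : ℝ → ℝ) x * (Ioc (-s) s).indicator 1 x = 2 * min r s := by
  simp_rw [← inter_indicator_mul, Pi.one_apply, mul_one, Ioc_inter_Ioc, max_neg_neg]
  rw [← Pi.one_def, integral_indicator_one measurableSet_Ioc,
    Real.volume_real_Ioc_of_le (by linarith [le_min hr hs])]
  ring

theorem abs_add_sub_abs_sub_eq (a b : ℝ) :
    |a + b| - |a - b| = 2 * (Real.sign a * Real.sign b * min |a| |b|) := by
  rcases lt_trichotomy a 0 with ha | rfl | ha <;>
    rcases lt_trichotomy b 0 with hb | rfl | hb <;>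
    simp only [Real.sign_of_neg, Real.sign_of_pos, Real.sign_zero, abs_of_neg, abs_of_pos,
      abs_zero, *] <;>
    grind

/-- For all real `a`, `b`, the Lebesgue integral over ℝ of
`(𝟙{a ≤ x} − 𝟙{−a < x})·(𝟙{b ≤ x} − 𝟙{−b < x})` equals `|a + b| − |a − b|`. -/
theorem integral_indicator_prod_eq_abs_add_sub_abs_sub (a b : ℝ) :
    ∫ x : ℝ, (((if a ≤ x then (1 : ℝ) else 0) - (if -a < x then (1 : ℝ) else 0)) *
        ((if b ≤ x then (1 : ℝ) else 0) - (if -b < x then (1 : ℝ) else 0))) =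
      |a + b| - |a - b| := by
  calc _ = ∫ x, (-Real.sign a * (Ioc (-|a|) |a|).indicator 1 x) *
          (-Real.sign b * (Ioc (-|b|) |b|).indicator 1 x) :=
        integral_congr_ae ((step_sub_step_ae_eq a).mul (step_sub_step_ae_eq b))
    _ = Real.sign a * Real.sign b *
          ∫ x, (Ioc (-|a|) |a|).indicator (1 : ℝ → ℝ) x * (Ioc (-|b|) |b|).indicator 1 x := by
        rw [← integral_const_mul]
        congr 1 with x
        ring
    _ = |a + b| - |a - b| := by
        rw [integral_indicator_Ioc_mul_indicator_Ioc (abs_nonneg a) (abs_nonneg b),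
          abs_add_sub_abs_sub_eq]
        ring
end

section
/- Let S1 and S2 be finite nonempty disjoint sets with cardinalities n1 and n2, let g̃ assign a real value to each element, and let p1, p2 ∈ ℝ. Then the Cramér–von Mises distance L(S1,S2) = ∫_ℝ [ (1/n1) Σ_{s∈S1} (𝟙{g̃(s)−p1 ≤ x} − 𝟙{p1−g̃(s) < x}) ]² dx + ∫_ℝ [ (1/n2) Σ_{s∈S2} (𝟙{g̃(s)−p2 ≤ x} − 𝟙{p2−g̃(s) < x}) ]² dx (Lebesgue integrals) equals (1/n1²) Σ_{s∈S1} Σ_{t∈S1} f¹(s,t) + (1/n2²) Σ_{s∈S2} Σ_{t∈S2} f²(s,t), where f^k(s,t) = |(g̃(s) − p_k) + (g̃(t) − p_k)| − |g̃(s) − g̃(t)| for k = 1, 2. -/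
/-!
Writing `a = g̃(s) - p`, the summand `𝟙{a ≤ x} - 𝟙{-a < x}` agrees off `{a, -a}` with
`-sign a` times the indicator of `(-|a|, |a|)`. Expanding the square, the cross term of `a` and `b`
therefore integrates to `sign a * sign b * 2 min(|a|, |b|) = |a + b| - |a - b|`.
-/

open MeasureTheory Finset Set

noncomputable def stepDiff (a x : ℝ) : ℝ :=
  (if a ≤ x then 1 else 0) - (if -a < x then 1 else 0)

lemma stepDiff_of_nonpos {a : ℝ} (ha : a ≤ 0) : stepDiff a = (Icc a (-a)).indicator 1 := by
  ext x
  simp only [stepDiff, indicator, Set.mem_Icc, Pi.one_apply]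
  split_ifs <;> grind

lemma stepDiff_of_pos {a : ℝ} (ha : 0 < a) : stepDiff a = -(Ioo (-a) a).indicator 1 := by
  ext x
  simp only [stepDiff, indicator, Set.mem_Ioo, Pi.one_apply, Pi.neg_apply]
  split_ifs <;> grind

lemma stepDiff_ae_eq (a : ℝ) :
    stepDiff a =ᵐ[volume] fun x => -Real.sign a * (Ioo (-|a|) |a|).indicator 1 x := by
  rcases le_or_gt a 0 with ha | ha
  · have hIoo : stepDiff a =ᵐ[volume] (Ioo a (-a)).indicator 1 := by
      rw [stepDiff_of_nonpos ha]
      exact indicator_ae_eq_of_ae_eq_set Ioo_ae_eq_Icc.symm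
    refine hIoo.trans (.of_eq ?_)
    ext x
    rcases ha.lt_or_eq with ha | rfl
    · simp [Real.sign_of_neg ha, abs_of_neg ha]
    · simp
  · refine .of_eq ?_
    ext x
    simp [stepDiff_of_pos ha, Real.sign_of_pos ha, abs_of_pos ha]

lemma stepDiff_mul_ae_eq (a b : ℝ) :
    (fun x => stepDiff a x * stepDiff b x) =ᵐ[volume] fun x =>
      Real.sign a * Real.sign b * (Ioo (-min |a| |b|) (min |a| |b|)).indicator 1 x := by
  filter_upwards [stepDiff_ae_eq a, stepDiff_ae_eq b] with x hxa hxb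
  rw [hxa, hxb, ← max_neg_neg, ← Ioo_inter_Ioo, inter_indicator_one, Pi.mul_apply]
  ring

lemma integrable_stepDiff_mul (a b : ℝ) :
    Integrable fun x => stepDiff a x * stepDiff b x := by
  have hIoo : IntegrableOn (fun _ => (1 : ℝ)) (Ioo (-min |a| |b|) (min |a| |b|)) :=
    integrableOn_const measure_Ioo_lt_top.ne
  exact (((integrable_indicator_iff measurableSet_Ioo).2 hIoo).const_mul _).congr
    (stepDiff_mul_ae_eq a b).symm

lemma sign_mul_sign_mul_two_min_abs (a b : ℝ) :
    Real.sign a * Real.sign b * (2 * min |a| |b|) = |a + b| - |a - b| := by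
  rcases eq_or_ne a 0 with rfl | ha; · simp
  rcases eq_or_ne b 0 with rfl | hb; · simp
  rcases ha.lt_or_gt with ha | ha <;> rcases hb.lt_or_gt with hb | hb <;>
    simp only [Real.sign_of_neg, Real.sign_of_pos, ha, hb, abs_of_neg, abs_of_pos, min_def] <;>
    split_ifs <;> cases abs_cases (a + b) <;> cases abs_cases (a - b) <;> linarith

lemma integral_stepDiff_mul (a b : ℝ) :
    ∫ x, stepDiff a x * stepDiff b x = |a + b| - |a - b| := by
  have hm : 0 ≤ min |a| |b| := le_min (abs_nonneg a) (abs_nonneg b)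
  rw [integral_congr_ae (stepDiff_mul_ae_eq a b), integral_const_mul,
    integral_indicator_one measurableSet_Ioo, Real.volume_real_Ioo_of_le (by linarith),
    ← sign_mul_sign_mul_two_min_abs]
  ring

lemma integral_sq_const_mul_sum_stepDiff {ι : Type*} (S : Finset ι) (a : ι → ℝ) (c : ℝ) :
    ∫ x, (c * ∑ i ∈ S, stepDiff (a i) x) ^ 2 =
      c ^ 2 * ∑ i ∈ S, ∑ j ∈ S, (|a i + a j| - |a i - a j|) := by
  simp_rw [mul_pow, sq, Finset.sum_mul_sum]
  rw [integral_const_mul, integral_finsetSum _ fun i _ =>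
    integrable_finsetSum _ fun j _ => integrable_stepDiff_mul _ _]
  simp_rw [integral_finsetSum _ fun j _ => integrable_stepDiff_mul _ _, integral_stepDiff_mul]

theorem cvm_distance_simpler_form_general {α : Type*} (S1 S2 : Finset α)
    (g : α → ℝ) (p1 p2 : ℝ) :
    (∫ x : ℝ, ((1 / (S1.card : ℝ)) *
        ∑ s ∈ S1, ((if g s - p1 ≤ x then (1 : ℝ) else 0) -
          (if p1 - g s < x then (1 : ℝ) else 0))) ^ 2) +
    (∫ x : ℝ, ((1 / (S2.card : ℝ)) *
        ∑ s ∈ S2, ((if g s - p2 ≤ x then (1 : ℝ) else 0) -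
          (if p2 - g s < x then (1 : ℝ) else 0))) ^ 2) =
      (1 / (S1.card : ℝ) ^ 2) *
        ∑ s ∈ S1, ∑ t ∈ S1, (|(g s - p1) + (g t - p1)| - |g s - g t|) +
      (1 / (S2.card : ℝ) ^ 2) *
        ∑ s ∈ S2, ∑ t ∈ S2, (|(g s - p2) + (g t - p2)| - |g s - g t|) := by
  have segment (S : Finset α) (p : ℝ) := by
    simpa only [stepDiff, neg_sub, sub_sub_sub_cancel_right, div_pow, one_pow] using
      integral_sq_const_mul_sum_stepDiff S (fun s => g s - p) (1 / (S.card : ℝ))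
  rw [segment S1 p1, segment S2 p2]

/-- Closed-form simplification of the Cramér–von Mises distance with `H(x) = x`:
the sum of the two integrated squared empirical-process terms equals the
double-sum expression with `f^k(s,t) = |(g̃(s)−p_k)+(g̃(t)−p_k)| − |g̃(s)−g̃(t)|`. -/
theorem cvm_distance_simpler_form {α : Type*} (S1 S2 : Finset α)
    (h1 : S1.Nonempty) (h2 : S2.Nonempty) (hdisj : Disjoint S1 S2)
    (g : α → ℝ) (p1 p2 : ℝ) :
    (∫ x : ℝ, ((1 / (S1.card : ℝ)) *
        ∑ s ∈ S1, ((if g s - p1 ≤ x then (1 : ℝ) else 0) -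
          (if p1 - g s < x then (1 : ℝ) else 0))) ^ 2) +
    (∫ x : ℝ, ((1 / (S2.card : ℝ)) *
        ∑ s ∈ S2, ((if g s - p2 ≤ x then (1 : ℝ) else 0) -
          (if p2 - g s < x then (1 : ℝ) else 0))) ^ 2) =
      (1 / (S1.card : ℝ) ^ 2) *
        ∑ s ∈ S1, ∑ t ∈ S1, (|(g s - p1) + (g t - p1)| - |g s - g t|) +
      (1 / (S2.card : ℝ) ^ 2) *
        ∑ s ∈ S2, ∑ t ∈ S2, (|(g s - p2) + (g t - p2)| - |g s - g t|) :=
  cvm_distance_simpler_form_general S1 S2 g p1 p2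
end

section
/- Let (Ω, P) be a probability space, S a finite set, and suppose the observed values are g̃(s) = c_s + ε_s where the true values satisfy c_s ∈ [0,1] for all s ∈ S and the noise variables (ε_s)_{s∈S} are independent, identically distributed and integrable with m = E|ε|. Let p1, p2 ∈ [0,1]. Then for every η > 0, with B = (4m + 4)/η, every partition of S into nonempty disjoint sets (S1, S2) satisfies P(|L(S1,S2)| ≤ B) ≥ 1 − η, where L(S1,S2) = (1/|S1|²) Σ_{s,t∈S1} f¹(s,t) + (1/|S2|²) Σ_{s,t∈S2} f²(s,t) and f^k(s,t) = |(g̃(s) − p_k) + (g̃(t) − p_k)| − |g̃(s) − g̃(t)|. -/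
/-
Each block of `L` is an average over pairs `(s, t)` of `|u + v| - |u - v|` with
`u = g̃(s) - p`, `v = g̃(t) - p`, and `||u + v| - |u - v|| ≤ 2 min(|u|, |v|) ≤ |u| + |v|`.
Since `c_s, p ∈ [0,1]`, `|g̃(s) - p| ≤ 1 + |ε_s|`, so `|L(S1,S2)|` is dominated by
`X = 2 avg_{S1} (1 + |ε_s|) + 2 avg_{S2} (1 + |ε_s|)`, whose expectation is `4m + 4` whatever
the partition. Markov's inequality for `X` at level `(4m + 4)/η` gives the claim.
-/

open MeasureTheory ProbabilityTheory Finset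
open scoped BigOperators

theorem abs_abs_add_sub_abs_sub_le {G : Type*} [AddCommGroup G] [LinearOrder G]
    [IsOrderedAddMonoid G] (u v : G) : |(|u + v| - |u - v|)| ≤ |u| + |v| := by
  have hv : |(|u + v| - |u - v|)| ≤ |v| + |v| :=
    calc |(|u + v| - |u - v|)| ≤ |(u + v) - (u - v)| := abs_abs_sub_abs_le_abs_sub _ _
      _ = |v + v| := by rw [add_sub_sub_cancel]
      _ ≤ |v| + |v| := abs_add_le _ _
  have hu : |(|u + v| - |u - v|)| ≤ |u| + |u| :=
    calc |(|u + v| - |u - v|)| ≤ |(u + v) - (v - u)| := by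
          rw [← abs_sub_comm v u]; exact abs_abs_sub_abs_le_abs_sub _ _
      _ = |u + u| := by abel_nf
      _ ≤ |u| + |u| := abs_add_le _ _
  rcases le_total |u| |v| with h | h
  · exact hu.trans (add_le_add_right h _)
  · exact hv.trans (add_le_add_left h _)

theorem abs_add_sub_le_one_add_abs {c p : ℝ} (hc : c ∈ Set.Icc (0 : ℝ) 1)
    (hp : p ∈ Set.Icc (0 : ℝ) 1) (e : ℝ) : |c + e - p| ≤ 1 + |e| := by
  have hcp : |c - p| ≤ 1 := abs_le.mpr ⟨by linarith [hc.1, hp.2], by linarith [hc.2, hp.1]⟩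
  calc |c + e - p| = |(c - p) + e| := by ring_nf
    _ ≤ 1 + |e| := (abs_add_le _ _).trans (add_le_add_left hcp _)

noncomputable def cvmComponent {α : Type*} (A : Finset α) (x : α → ℝ) (p : ℝ) : ℝ :=
  (1 / (A.card : ℝ) ^ 2) * ∑ s ∈ A, ∑ t ∈ A, (|(x s - p) + (x t - p)| - |x s - x t|)

section

variable {α : Type*} (A : Finset α) (x : α → ℝ) (p : ℝ)

theorem cvmComponent_eq_expect :
    cvmComponent A x p = 𝔼 s ∈ A, 𝔼 t ∈ A, (|(x s - p) + (x t - p)| - |x s - x t|) := by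
  simp only [cvmComponent, expect_eq_sum_div_card, ← sum_div]
  ring

theorem abs_cvmComponent_le {b : α → ℝ} (hb : ∀ s ∈ A, |x s - p| ≤ b s) :
    |cvmComponent A x p| ≤ 2 * 𝔼 s ∈ A, b s := by
  rcases A.eq_empty_or_nonempty with rfl | hA
  · simp [cvmComponent]
  rw [cvmComponent_eq_expect]
  calc |𝔼 s ∈ A, 𝔼 t ∈ A, (|(x s - p) + (x t - p)| - |x s - x t|)|
      ≤ 𝔼 s ∈ A, 𝔼 t ∈ A, (b s + b t) := by
        refine (abs_expect_le _ _).trans (expect_le_expect fun s hs => ?_)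
        refine (abs_expect_le _ _).trans (expect_le_expect fun t ht => ?_)
        rw [← sub_sub_sub_cancel_right (x s) (x t) p]
        exact (abs_abs_add_sub_abs_sub_le _ _).trans (add_le_add (hb s hs) (hb t ht))
    _ = 2 * 𝔼 s ∈ A, b s := by
        simp only [expect_add_distrib, expect_const hA, two_mul]

end

section

variable {Ω α : Type*} [MeasurableSpace Ω] {μ : Measure Ω}

theorem integrable_finsetExpect (A : Finset α) {Y : α → Ω → ℝ}
    (hY : ∀ s ∈ A, Integrable (Y s) μ) : Integrable (fun ω => 𝔼 s ∈ A, Y s ω) μ := by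
  simp only [expect_eq_sum_div_card]
  exact (integrable_finsetSum A hY).div_const _

theorem integral_finsetExpect (A : Finset α) {Y : α → Ω → ℝ}
    (hY : ∀ s ∈ A, Integrable (Y s) μ) :
    ∫ ω, 𝔼 s ∈ A, Y s ω ∂μ = 𝔼 s ∈ A, ∫ ω, Y s ω ∂μ := by
  simp only [expect_eq_sum_div_card]
  rw [integral_div, integral_finsetSum A hY]

theorem ofReal_one_sub_integral_div_le_measure_lt [IsProbabilityMeasure μ] {X : Ω → ℝ}
    (hX0 : 0 ≤ᵐ[μ] X) (hX : Integrable X μ) {B : ℝ} (hB : 0 < B) :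
    ENNReal.ofReal (1 - (∫ ω, X ω ∂μ) / B) ≤ μ {ω | X ω < B} := by
  have markov : μ.real {ω | B ≤ X ω} ≤ (∫ ω, X ω ∂μ) / B := by
    rw [le_div_iff₀' hB]
    exact mul_meas_ge_le_integral_of_nonneg hX0 hX B
  have cover : 1 ≤ μ.real {ω | X ω < B} + μ.real {ω | B ≤ X ω} := by
    calc (1 : ℝ) = μ.real ({ω | X ω < B} ∪ {ω | B ≤ X ω}) := by
          rw [← probReal_univ (μ := μ)]; congr 1; ext ω; simp [lt_or_ge]
      _ ≤ _ := measureReal_union_le _ _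
  rw [ENNReal.ofReal_le_iff_le_toReal (measure_ne_top μ _)]
  change _ ≤ μ.real _
  linarith

variable {A : Finset α} {Y : α → Ω → ℝ} {Y₀ : Ω → ℝ}

theorem integrable_finsetExpect_of_identDistrib (hY : ∀ s ∈ A, IdentDistrib (Y s) Y₀ μ μ)
    (hY₀ : Integrable Y₀ μ) : Integrable (fun ω => 𝔼 s ∈ A, Y s ω) μ :=
  integrable_finsetExpect A fun s hs => (hY s hs).integrable_iff.2 hY₀

theorem integral_finsetExpect_of_identDistrib (hA : A.Nonempty)
    (hY : ∀ s ∈ A, IdentDistrib (Y s) Y₀ μ μ) (hY₀ : Integrable Y₀ μ) :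
    ∫ ω, 𝔼 s ∈ A, Y s ω ∂μ = ∫ ω, Y₀ ω ∂μ := by
  rw [integral_finsetExpect A fun s hs => (hY s hs).integrable_iff.2 hY₀,
    expect_congr rfl fun s hs => (hY s hs).integral_eq, expect_const hA]

theorem ProbabilityTheory.IdentDistrib.one_add_abs {ε ε₀ : Ω → ℝ} (h : IdentDistrib ε ε₀ μ μ) :
    IdentDistrib (fun ω => 1 + |ε ω|) (fun ω => 1 + |ε₀ ω|) μ μ :=
  h.comp (u := fun x => 1 + |x|) (measurable_const.add measurable_abs)

variable {ε : α → Ω → ℝ} {ε₀ : Ω → ℝ}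

theorem integrable_finsetExpect_one_add_abs [IsFiniteMeasure μ]
    (hε : ∀ s ∈ A, IdentDistrib (ε s) ε₀ μ μ) (hε₀ : Integrable ε₀ μ) :
    Integrable (fun ω => 𝔼 s ∈ A, (1 + |ε s ω|)) μ :=
  integrable_finsetExpect_of_identDistrib (fun s hs => (hε s hs).one_add_abs)
    ((integrable_const 1).add hε₀.abs)

theorem integral_finsetExpect_one_add_abs [IsProbabilityMeasure μ] (hA : A.Nonempty)
    (hε : ∀ s ∈ A, IdentDistrib (ε s) ε₀ μ μ) (hε₀ : Integrable ε₀ μ) :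
    ∫ ω, 𝔼 s ∈ A, (1 + |ε s ω|) ∂μ = 1 + ∫ ω, |ε₀ ω| ∂μ := by
  rw [integral_finsetExpect_of_identDistrib hA (fun s hs => (hε s hs).one_add_abs)
    ((integrable_const 1).add hε₀.abs), integral_add (integrable_const 1) hε₀.abs]
  simp only [integral_const, probReal_univ, smul_eq_mul, one_mul]

end

theorem cvm_distance_bounded_in_probability_general
    {Ω : Type*} [MeasurableSpace Ω] (μ : Measure Ω) [IsProbabilityMeasure μ]
    {α : Type*} [DecidableEq α] (S : Finset α)
    (c : α → ℝ) (hc : ∀ s ∈ S, c s ∈ Set.Icc (0 : ℝ) 1)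
    (p1 p2 : ℝ) (hp1 : p1 ∈ Set.Icc (0 : ℝ) 1) (hp2 : p2 ∈ Set.Icc (0 : ℝ) 1)
    (ε : α → Ω → ℝ) (ε₀ : Ω → ℝ)
    (hmeas : ∀ s, Measurable (ε s))
    (hident : ∀ s ∈ S, μ.map (ε s) = μ.map ε₀)
    (hint : Integrable ε₀ μ)
    (g : α → Ω → ℝ) (hg : ∀ s ∈ S, g s = fun ω => c s + ε s ω)
    (η : ℝ) (hη : 0 < η) :
    ∀ S1 S2 : Finset α, S1.Nonempty → S2.Nonempty → Disjoint S1 S2 → S1 ∪ S2 = S →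
      ENNReal.ofReal (1 - η) ≤
        μ {ω | |(1 / (S1.card : ℝ) ^ 2) *
            ∑ s ∈ S1, ∑ t ∈ S1, (|(g s ω - p1) + (g t ω - p1)| - |g s ω - g t ω|) +
          (1 / (S2.card : ℝ) ^ 2) *
            ∑ s ∈ S2, ∑ t ∈ S2, (|(g s ω - p2) + (g t ω - p2)| - |g s ω - g t ω|)| ≤
          (4 * (∫ ω, |ε₀ ω| ∂μ) + 4) / η} := by
  intro S1 S2 hS1 hS2 _ hunion
  set m := ∫ ω, |ε₀ ω| ∂μ
  have hε : ∀ s ∈ S, IdentDistrib (ε s) ε₀ μ μ :=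
    fun s hs => ⟨(hmeas s).aemeasurable, hint.aemeasurable, hident s hs⟩
  have hsub1 : S1 ⊆ S := hunion ▸ subset_union_left
  have hsub2 : S2 ⊆ S := hunion ▸ subset_union_right
  set X : Ω → ℝ := fun ω => 2 * 𝔼 s ∈ S1, (1 + |ε s ω|) + 2 * 𝔼 s ∈ S2, (1 + |ε s ω|)
  have hX1 := integrable_finsetExpect_one_add_abs (fun s hs => hε s (hsub1 hs)) hint
  have hX2 := integrable_finsetExpect_one_add_abs (fun s hs => hε s (hsub2 hs)) hint
  have hX_integral : ∫ ω, X ω ∂μ = 4 * m + 4 := by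
    rw [integral_add (hX1.const_mul 2) (hX2.const_mul 2), integral_const_mul, integral_const_mul,
      integral_finsetExpect_one_add_abs hS1 (fun s hs => hε s (hsub1 hs)) hint,
      integral_finsetExpect_one_add_abs hS2 (fun s hs => hε s (hsub2 hs)) hint]
    ring
  have hgε : ∀ p ∈ Set.Icc (0 : ℝ) 1, ∀ ω, ∀ s ∈ S, |g s ω - p| ≤ 1 + |ε s ω| :=
    fun p hp ω s hs => by rw [hg s hs]; exact abs_add_sub_le_one_add_abs (hc s hs) hp _
  have hLX : ∀ ω, |cvmComponent S1 (g · ω) p1 + cvmComponent S2 (g · ω) p2| ≤ X ω :=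
    fun ω => (abs_add_le _ _).trans (add_le_add
      (abs_cvmComponent_le _ _ _ fun s hs => hgε p1 hp1 ω s (hsub1 hs))
      (abs_cvmComponent_le _ _ _ fun s hs => hgε p2 hp2 ω s (hsub2 hs)))
  have hX0 : 0 ≤ᵐ[μ] X := ae_of_all μ fun ω => by positivity
  have hm4 : 0 < 4 * m + 4 := by positivity
  calc ENNReal.ofReal (1 - η) = ENNReal.ofReal (1 - (∫ ω, X ω ∂μ) / ((4 * m + 4) / η)) := by
        rw [hX_integral, div_div_cancel₀ hm4.ne']
    _ ≤ μ {ω | X ω < (4 * m + 4) / η} :=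
        ofReal_one_sub_integral_div_le_measure_lt hX0
          ((hX1.const_mul 2).add (hX2.const_mul 2)) (div_pos hm4 hη)
    _ ≤ _ := measure_mono fun ω hω => (hLX ω).trans hω.le

/-- Uniform-in-partitions boundedness in probability (Theorem 1): with
`g̃(s) = c_s + ε_s`, `c_s, p1, p2 ∈ [0,1]` and i.i.d. integrable noise with
`m = E|ε|`, for every `η > 0` and `B = (4m + 4)/η`, every partition `(S1,S2)`
of `S` into nonempty disjoint sets satisfies `P(|L(S1,S2)| ≤ B) ≥ 1 − η`. -/
theorem cvm_distance_bounded_in_probability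
    {Ω : Type*} [MeasurableSpace Ω] (μ : Measure Ω) [IsProbabilityMeasure μ]
    {α : Type*} [DecidableEq α] (S : Finset α)
    (c : α → ℝ) (hc : ∀ s ∈ S, c s ∈ Set.Icc (0 : ℝ) 1)
    (p1 p2 : ℝ) (hp1 : p1 ∈ Set.Icc (0 : ℝ) 1) (hp2 : p2 ∈ Set.Icc (0 : ℝ) 1)
    (ε : α → Ω → ℝ) (ε₀ : Ω → ℝ)
    (hmeas : ∀ s, Measurable (ε s)) (hmeas₀ : Measurable ε₀)
    (hindep : iIndepFun ε μ)
    (hident : ∀ s ∈ S, μ.map (ε s) = μ.map ε₀)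
    (hint : Integrable ε₀ μ)
    (g : α → Ω → ℝ) (hg : ∀ s ∈ S, g s = fun ω => c s + ε s ω)
    (η : ℝ) (hη : 0 < η) :
    ∀ S1 S2 : Finset α, S1.Nonempty → S2.Nonempty → Disjoint S1 S2 → S1 ∪ S2 = S →
      ENNReal.ofReal (1 - η) ≤
        μ {ω | |(1 / (S1.card : ℝ) ^ 2) *
            ∑ s ∈ S1, ∑ t ∈ S1, (|(g s ω - p1) + (g t ω - p1)| - |g s ω - g t ω|) +
          (1 / (S2.card : ℝ) ^ 2) *
            ∑ s ∈ S2, ∑ t ∈ S2, (|(g s ω - p2) + (g t ω - p2)| - |g s ω - g t ω|)| ≤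
          (4 * (∫ ω, |ε₀ ω| ∂μ) + 4) / η} :=
  cvm_distance_bounded_in_probability_general μ S c hc p1 p2 hp1 hp2 ε ε₀ hmeas hident hint g hg η
    hη
end

section
/- Let S1 and S2 be finite disjoint sets, h, k ∈ S1 distinct, g̃ real-valued on S1 ∪ S2 and p1, p2 ∈ ℝ. With f^m(s,t) = |(g̃(s) − p_m) + (g̃(t) − p_m)| − |g̃(s) − g̃(t)| for m = 1, 2, L̃(A,B) = Σ_{s∈A} Σ_{t∈A} f¹(s,t) + Σ_{s∈B} Σ_{t∈B} f²(s,t), and unnormalized netgains ÑG(h; S1) = L̃(S1\{h}, S2 ∪ {h}) − L̃(S1, S2) and ÑG(h; S1\{k}) = L̃(S1\{h,k}, S2 ∪ {h,k}) − L̃(S1\{k}, S2 ∪ {k}), one has ÑG(h; S1\{k}) − ÑG(h; S1) = 2(f¹(h,k) + f²(h,k)). -/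
/-!
Both halves of `L̃` are pair sums `Q A = ∑ s ∈ A, ∑ t ∈ A, f s t`. Writing `B = S1 \ {h, k}`, the
change of netgain is, in each half, a mixed second difference
`Q (B ∪ {h, k}) - Q (B ∪ {k}) - Q (B ∪ {h}) + Q B` (with `B = S2` for the second half), and in such
a difference every term except the cross terms `f h k + f k h` cancels. Symmetry of `f¹, f²` does
the rest.
-/

open Finset

section PairSums

variable {α M : Type*} [DecidableEq α] [AddCommGroup M] (f : α → α → M)

theorem sum_sum_insert_of_notMem {B : Finset α} {x : α} (hx : x ∉ B) :
    ∑ s ∈ insert x B, ∑ t ∈ insert x B, f s t =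
      ∑ s ∈ B, ∑ t ∈ B, f s t + ∑ t ∈ B, (f x t + f t x) + f x x := by
  simp only [sum_insert hx, sum_add_distrib]
  abel

theorem sum_sum_insert_insert_sub {B : Finset α} {x y : α} (hxy : x ≠ y) (hx : x ∉ B)
    (hy : y ∉ B) :
    ∑ s ∈ insert x (insert y B), ∑ t ∈ insert x (insert y B), f s t
        - ∑ s ∈ insert y B, ∑ t ∈ insert y B, f s t
        - ∑ s ∈ insert x B, ∑ t ∈ insert x B, f s t + ∑ s ∈ B, ∑ t ∈ B, f s t =
      f x y + f y x := by
  have hx' : x ∉ insert y B := by simp [hxy, hx]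
  rw [sum_sum_insert_of_notMem f hx', sum_sum_insert_of_notMem f hx,
    sum_insert (f := fun t => f x t + f t x) hy]
  abel

end PairSums

/-- Exact perturbation identity for unnormalized netgains: removing a further
pixel `k` changes the netgain of `h` by exactly `2(f¹(h,k) + f²(h,k))`. -/
theorem unnormalized_netgain_perturbation {α : Type*} [DecidableEq α]
    (S1 S2 : Finset α) (hdisj : Disjoint S1 S2)
    (h k : α) (hh : h ∈ S1) (hk : k ∈ S1) (hne : h ≠ k)
    (g : α → ℝ) (p1 p2 : ℝ) (f1 f2 : α → α → ℝ)
    (hf1 : f1 = fun s t => |(g s - p1) + (g t - p1)| - |g s - g t|)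
    (hf2 : f2 = fun s t => |(g s - p2) + (g t - p2)| - |g s - g t|)
    (Lt : Finset α → Finset α → ℝ)
    (hLt : Lt = fun A B => ∑ s ∈ A, ∑ t ∈ A, f1 s t + ∑ s ∈ B, ∑ t ∈ B, f2 s t) :
    (Lt (S1 \ {h, k}) (S2 ∪ {h, k}) - Lt (S1.erase k) (insert k S2)) -
      (Lt (S1.erase h) (insert h S2) - Lt S1 S2) =
      2 * (f1 h k + f2 h k) := by
  subst hLt
  set B := (S1.erase k).erase h
  have hB : S1 \ {h, k} = B := by rw [sdiff_insert, sdiff_singleton_eq_erase]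
  have hhB : h ∉ B := notMem_erase h _
  have hkB : k ∉ B := by simp [B]
  have hS1k : S1.erase k = insert h B := (insert_erase (mem_erase.2 ⟨hne, hh⟩)).symm
  have hS1h : S1.erase h = insert k B := by
    rw [show B = (S1.erase h).erase k from erase_right_comm,
      insert_erase (mem_erase.2 ⟨hne.symm, hk⟩)]
  have hS1 : S1 = insert h (insert k B) := by rw [← hS1h, insert_erase hh]
  have hS2 : S2 ∪ {h, k} = insert h (insert k S2) := by
    rw [union_comm, insert_union, singleton_union]
  have hf1_symm : f1 k h = f1 h k := by simp only [hf1]; rw [add_comm, abs_sub_comm]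
  have hf2_symm : f2 k h = f2 h k := by simp only [hf2]; rw [add_comm, abs_sub_comm]
  have h1 := sum_sum_insert_insert_sub f1 hne hhB hkB
  have h2 := sum_sum_insert_insert_sub f2 hne (disjoint_left.mp hdisj hh)
    (disjoint_left.mp hdisj hk)
  rw [hB, hS1h, hS1k, hS2, hS1]
  linarith
end

section
/- Let S be a finite set and for finite subsets A, B of S define δ(A,B) = ||A| − |B|| if A ⊆ B or B ⊆ A; δ(A,B) = max(|A|, |B|) if A ∩ B = ∅; and δ(A,B) = max(|A| − |A∩B|, |B| − |A∩B|) otherwise. Then δ is a metric on the collection of subsets of S: (1) δ(A,B) = 0 if and only if A = B; (2) δ(A,B) = δ(B,A) for all A, B; (3) δ(A,B) ≤ δ(A,C) + δ(C,B) for all A, B, C ⊆ S. -/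
/-! Each of the three cases of `δ` equals `max (|A \ B|, |B \ A|)`. The map `(A, B) ↦ |A \ B|` is a
quasi-metric on finite sets: it vanishes iff `A ⊆ B`, and `A \ B ⊆ (A \ C) ∪ (C \ B)` gives the
triangle inequality. Symmetrising by a maximum then yields a metric. -/

open Finset

/-- The segmentation distance `δ` between subsets of a finite pixel set:
`δ(A,B) = ||A| − |B||` if one set contains the other, `δ(A,B) = max(|A|,|B|)`
if the sets are disjoint, and `δ(A,B) = max(|A| − |A∩B|, |B| − |A∩B|)`
otherwise. -/
def segDist {α : Type*} [DecidableEq α] (A B : Finset α) : ℕ :=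
  if A ⊆ B ∨ B ⊆ A then max A.card B.card - min A.card B.card
  else if A ∩ B = ∅ then max A.card B.card
  else max (A.card - (A ∩ B).card) (B.card - (A ∩ B).card)

section

variable {α : Type*} [DecidableEq α]

theorem segDist_eq_max_card_sdiff (A B : Finset α) :
    segDist A B = max #(A \ B) #(B \ A) := by
  rw [segDist, card_sdiff, card_sdiff, inter_comm B A]
  split_ifs with hsub hdisj
  · rcases hsub with h | h
    · rw [inter_eq_left.mpr h]
      have := card_le_card h
      omega
    · rw [inter_eq_right.mpr h]
      have := card_le_card h
      omega
  · rw [hdisj, card_empty]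
    omega
  · rfl

theorem card_sdiff_le_card_sdiff_add_card_sdiff (A B C : Finset α) :
    #(A \ B) ≤ #(A \ C) + #(C \ B) :=
  (card_le_card (sdiff_triangle A C B)).trans (card_union_le _ _)

theorem segDist_eq_zero_iff {A B : Finset α} : segDist A B = 0 ↔ A = B := by
  rw [segDist_eq_max_card_sdiff, Nat.max_eq_zero_iff, card_eq_zero, card_eq_zero,
    sdiff_eq_empty_iff_subset, sdiff_eq_empty_iff_subset, subset_antisymm_iff]

theorem segDist_comm (A B : Finset α) : segDist A B = segDist B A := by
  rw [segDist_eq_max_card_sdiff, segDist_eq_max_card_sdiff, max_comm]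

theorem segDist_triangle (A B C : Finset α) : segDist A B ≤ segDist A C + segDist C B := by
  simp only [segDist_eq_max_card_sdiff]
  have hAB := card_sdiff_le_card_sdiff_add_card_sdiff A B C
  have hBA := card_sdiff_le_card_sdiff_add_card_sdiff B A C
  omega

end

/-- `δ` is a valid metric on the collection of subsets of a finite set `S`:
it vanishes exactly on equal pairs, is symmetric, and satisfies the triangle
inequality. -/
theorem segDist_is_metric {α : Type*} [DecidableEq α] (S : Finset α) :
    (∀ A B : Finset α, A ⊆ S → B ⊆ S → (segDist A B = 0 ↔ A = B)) ∧
    (∀ A B : Finset α, A ⊆ S → B ⊆ S → segDist A B = segDist B A) ∧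
    (∀ A B C : Finset α, A ⊆ S → B ⊆ S → C ⊆ S →
      segDist A B ≤ segDist A C + segDist C B) :=
  ⟨fun _ _ _ _ => segDist_eq_zero_iff, fun A B _ _ => segDist_comm A B,
    fun A B C _ _ _ => segDist_triangle A B C⟩
end
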